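/- arXiv:0809.0033 — 4 statements merged into one kernel-verified Lean document; each statement's English description precedes it below -/
import Mathlib

section
/- Let H = H₁ ⊗ H₂ be a Kronecker product of unitary matrices H₁ ∈ U(n₁), H₂ ∈ U(n₂), with n = n₁·n₂ total eigenvalues. Suppose all eigenvalues λ_i of H, except exactly one eigenvalue λ_{i₀} of multiplicity one, lie in {1, a} for some a ∈ ℂ with a ≠ ±1. Assume further that λ_{i₀} ≠ a², and that either λ_{i₀} ≠ 1/a or the eigenvalue 1 occurs with multiplicity strictly greater than n/2. Then n₁ = 1 or n₂ = 1. -/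
/-!
Both factors are normal, hence diagonalisable, so the eigenvalues of `H₁ ⊗ H₂` are the products
`dᵢ eⱼ`, all nonzero since `H₁ ⊗ H₂` is invertible. Let `(i₀, j₀)` be the position of `λ₀`. For
`i ≠ i₀` and `j ≠ j₀` we have `(dᵢ₀ eⱼ) (dᵢ eⱼ₀) = λ₀ (dᵢ eⱼ)` with all three products in
`{1, a}`, and since `λ₀ ∉ {1, a, a²}` this forces `dᵢ eⱼ = a` and `λ₀ a = 1`. Hence if
`n₁, n₂ ≥ 2`, then `λ₀ = 1 / a`, and the eigenvalue `1` can only sit in row `i₀` or column `j₀`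
away from `(i₀, j₀)`, so it occurs at most `n₁ + n₂ - 2 ≤ n₁ n₂ / 2` times.
-/

open Matrix Polynomial Kronecker

theorem Module.End.isSemisimple_of_isStarNormal {E : Type*} [NormedAddCommGroup E]
    [InnerProductSpace ℂ E] [FiniteDimensional ℂ E] (T : Module.End ℂ E) [IsStarNormal T] :
    T.IsSemisimple := by
  have hsa (S : selfAdjoint (Module.End ℂ E)) : (S : Module.End ℂ E).IsSemisimple :=
    Module.End.isFinitelySemisimple_iff_isSemisimple.mp
      (LinearMap.isSymmetric_iff_isSelfAdjoint _ |>.mpr S.2).isFinitelySemisimple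
  rw [← realPart_add_I_smul_imaginaryPart T]
  exact (hsa _).add_of_commute ((Commute.realPart_imaginaryPart T).smul_right Complex.I)
    (Module.End.IsSemisimple_smul Complex.I (hsa _))

theorem Module.End.exists_toMatrix_eq_conj_diagonal {K V n : Type*} [Field K] [AddCommGroup V]
    [Module K V] [Fintype n] [DecidableEq n] (b : Module.Basis n K V) {f : Module.End K V}
    (hf : ⨆ μ, f.eigenspace μ = ⊤) :
    ∃ (P : GL n K) (d : n → K), LinearMap.toMatrix b b f = P * diagonal d * P⁻¹ := by
  classical
  have : FiniteDimensional K V := Module.Finite.of_basis b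
  have hint : DirectSum.IsInternal fun μ ↦ f.eigenspace μ :=
    (DirectSum.isInternal_submodule_iff_iSupIndep_and_iSup_eq_top _).mpr
      ⟨f.eigenspaces_iSupIndep, hf⟩
  let c₀ := hint.collectedBasis fun μ ↦ Module.finBasis K (f.eigenspace μ)
  have := FiniteDimensional.fintypeBasisIndex c₀
  let e := c₀.indexEquiv b
  let c := c₀.reindex e
  let d : n → K := fun i ↦ (e.symm i).1
  have hc (i : n) : f (c i) = d i • c i := by
    rw [Module.Basis.reindex_apply]
    exact Module.End.mem_eigenspace_iff.mp (hint.collectedBasis_mem _ _)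
  have hdiag : LinearMap.toMatrix c c f = diagonal d := by
    ext i j
    rw [LinearMap.toMatrix_apply, hc, map_smul, c.repr_self, Finsupp.smul_apply,
      Finsupp.single_apply, diagonal_apply]
    split_ifs <;> simp_all [eq_comm]
  refine ⟨⟨b.toMatrix c, c.toMatrix b, b.toMatrix_mul_toMatrix_flip c,
    c.toMatrix_mul_toMatrix_flip b⟩, d, ?_⟩
  rw [← basis_toMatrix_mul_linearMap_toMatrix_mul_basis_toMatrix b c b c, hdiag]
  rfl

theorem Matrix.exists_conj_diagonal_of_isStarNormal {n : Type*} [Fintype n] [DecidableEq n]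
    (A : Matrix n n ℂ) [IsStarNormal A] : ∃ (P : GL n ℂ) (d : n → ℂ), A = P * diagonal d * P⁻¹ := by
  let φ := LinearMap.toMatrixOrthonormal (EuclideanSpace.basisFun n ℂ)
  have := IsStarNormal.map φ.symm A
  have hT := (Module.End.isSemisimple_of_isStarNormal (φ.symm A)).iSup_eigenspace_eq_top
  have h := Module.End.exists_toMatrix_eq_conj_diagonal (EuclideanSpace.basisFun n ℂ).toBasis hT
  rwa [← φ.apply_symm_apply A]

theorem Matrix.roots_charpoly_conj_diagonal {K n : Type*} [Field K] [Fintype n] [DecidableEq n]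
    (P : GL n K) (d : n → K) :
    (P * diagonal d * P⁻¹ : Matrix n n K).charpoly.roots = Finset.univ.val.map d := by
  rw [coe_units_inv, charpoly_units_conj, charpoly_diagonal, Finset.prod_eq_multiset_prod]
  simpa [Multiset.map_map, Function.comp_def] using
    roots_multiset_prod_X_sub_C (Finset.univ.val.map d)

theorem Matrix.roots_charpoly_kronecker_conj_diagonal {K m n : Type*} [Field K] [Fintype m]
    [DecidableEq m] [Fintype n] [DecidableEq n] (P : GL m K) (Q : GL n K) (d : m → K)
    (e : n → K) :
    ((P * diagonal d * P⁻¹ : Matrix m m K) ⊗ₖ (Q * diagonal e * Q⁻¹ : Matrix n n K)).charpoly.roots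
      = Finset.univ.val.map fun p : m × n ↦ d p.1 * e p.2 := by
  let PQ : GL (m × n) K := ⟨P ⊗ₖ Q, ↑P⁻¹ ⊗ₖ ↑Q⁻¹, by simp [← mul_kronecker_mul],
    by simp [← mul_kronecker_mul]⟩
  rw [mul_kronecker_mul, mul_kronecker_mul, diagonal_kronecker_diagonal]
  exact roots_charpoly_conj_diagonal PQ _

theorem eq_and_mul_eq_one_of_mul_eq_mul {K : Type*} [Field K] {a lam x y z : K}
    (hx : x = 1 ∨ x = a) (hy : y = 1 ∨ y = a) (hz : z = 1 ∨ z = a) (hz₀ : z ≠ 0)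
    (hlam₁ : lam ≠ 1) (hlam_a : lam ≠ a) (hlam_sq : lam ≠ a ^ 2) (h : x * y = lam * z) :
    z = a ∧ lam * a = 1 := by
  have hz_a : z = a := by
    refine hz.resolve_left fun hz₁ ↦ ?_
    rcases hx with hx | hx <;> rcases hy with hy | hy <;> rw [hx, hy, hz₁] at h
    exacts [hlam₁ (by simpa using h.symm), hlam_a (by simpa using h.symm),
      hlam_a (by simpa using h.symm), hlam_sq (by simpa [sq] using h.symm)]
  rw [hz_a] at h hz₀
  have hcancel (c : K) (hc : c * a = lam * a) : lam = c := (mul_right_cancel₀ hz₀ hc).symm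
  refine ⟨hz_a, ?_⟩
  rcases hx with hx | hx <;> rcases hy with hy | hy <;> rw [hx, hy] at h
  · linear_combination -h
  · exact absurd (hcancel 1 (by linear_combination h)) hlam₁
  · exact absurd (hcancel 1 (by linear_combination h)) hlam₁
  · exact absurd (hcancel a (by linear_combination h)) hlam_a

theorem Finset.card_filter_add_two_le_of_forall_mem_cross {ι κ : Type*} [Fintype ι]
    [Fintype κ] [DecidableEq ι] [DecidableEq κ] (P : ι × κ → Prop) [DecidablePred P] {i₀ : ι}
    {j₀ : κ} (h₀ : ¬ P (i₀, j₀))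
    (hP : ∀ i j, P (i, j) → i = i₀ ∨ j = j₀) :
    (univ.filter P).card + 2 ≤ Fintype.card ι + Fintype.card κ := by
  have hsub : univ.filter P ⊆ {i₀} ×ˢ univ.erase j₀ ∪ univ.erase i₀ ×ˢ {j₀} := by
    rintro ⟨i, j⟩ hp
    simp only [mem_filter, mem_univ, true_and] at hp
    rcases hP i j hp with rfl | rfl <;> aesop
  have := (card_le_card hsub).trans (card_union_le _ _)
  simp only [card_product, card_singleton, card_erase_of_mem (mem_univ _), card_univ] at this
  have : 0 < Fintype.card ι := Fintype.card_pos_iff.mpr ⟨i₀⟩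
  have : 0 < Fintype.card κ := Fintype.card_pos_iff.mpr ⟨j₀⟩
  omega

theorem lam_mul_eq_one_and_card_filter_add_two_le {ι κ K : Type*} [Fintype ι] [Fintype κ]
    [DecidableEq ι] [DecidableEq κ] [Field K] [DecidableEq K] (d : ι → K) (e : κ → K) {a lam : K}
    (p₀ : ι × κ) (hp₀ : d p₀.1 * e p₀.2 = lam)
    (hp : ∀ p ≠ p₀, d p.1 * e p.2 = 1 ∨ d p.1 * e p.2 = a)
    (h₀ : ∀ p : ι × κ, d p.1 * e p.2 ≠ 0) (ha : a ≠ 1) (hlam₁ : lam ≠ 1) (hlam_a : lam ≠ a)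
    (hlam_sq : lam ≠ a ^ 2) (hι : 1 < Fintype.card ι) (hκ : 1 < Fintype.card κ) :
    lam * a = 1 ∧
      (Finset.univ.filter fun p : ι × κ ↦ 1 = d p.1 * e p.2).card + 2 ≤
        Fintype.card ι + Fintype.card κ := by
  have hoff {i j} (hi : i ≠ p₀.1) (hj : j ≠ p₀.2) : d i * e j = a ∧ lam * a = 1 :=
    eq_and_mul_eq_one_of_mul_eq_mul (hp (p₀.1, j) (by simp [Prod.ext_iff, hj]))
      (hp (i, p₀.2) (by simp [Prod.ext_iff, hi])) (hp (i, j) (by simp [Prod.ext_iff, hi]))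
      (h₀ (i, j)) hlam₁ hlam_a hlam_sq (by rw [← hp₀]; ring)
  obtain ⟨i, hi⟩ := Fintype.exists_ne_of_one_lt_card hι p₀.1
  obtain ⟨j, hj⟩ := Fintype.exists_ne_of_one_lt_card hκ p₀.2
  refine ⟨(hoff hi hj).2, Finset.card_filter_add_two_le_of_forall_mem_cross
    (fun p ↦ 1 = d p.1 * e p.2) (hp₀ ▸ hlam₁.symm) fun i j h ↦ ?_⟩
  by_contra! hij
  exact ha ((hoff hij.1 hij.2).1 ▸ h).symm

theorem Finset.exists_forall_ne_mem_of_map_univ_eq_cons {α β : Type*} [Fintype α] [DecidableEq α]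
    {f : α → β} {b : β} {t : Multiset β} (h : univ.val.map f = b ::ₘ t) :
    ∃ a₀, f a₀ = b ∧ ∀ a ≠ a₀, f a ∈ t := by
  obtain ⟨a₀, -, ha₀, rfl⟩ := (Multiset.map_eq_cons f _ _ _).mpr h
  exact ⟨a₀, ha₀, fun a ha ↦ Multiset.mem_map_of_mem f ((Multiset.mem_erase_of_ne ha).mpr
    (mem_univ a))⟩

theorem stmt4_general (n₁ n₂ : ℕ)
    (H₁ : Matrix (Fin n₁) (Fin n₁) ℂ) (H₂ : Matrix (Fin n₂) (Fin n₂) ℂ)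
    (hU₁ : H₁ ∈ Matrix.unitaryGroup (Fin n₁) ℂ) (hU₂ : H₂ ∈ Matrix.unitaryGroup (Fin n₂) ℂ)
    (a lam₀ : ℂ) (ha1 : a ≠ 1)
    (E' : Multiset ℂ)
    (hE : (Matrix.kroneckerMap (· * ·) H₁ H₂).charpoly.roots = lam₀ ::ₘ E')
    (hE' : ∀ x ∈ E', x = 1 ∨ x = a)
    (hlam : lam₀ ≠ 1 ∧ lam₀ ≠ a)
    (h1 : lam₀ ≠ a ^ 2)
    (h2 : lam₀ ≠ 1 / a ∨
      (n₁ * n₂ : ℚ) / 2 <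
        (Multiset.count 1 (Matrix.kroneckerMap (· * ·) H₁ H₂).charpoly.roots : ℚ)) :
    n₁ = 1 ∨ n₂ = 1 := by
  classical
  have hdet : (H₁ ⊗ₖ H₂).det ≠ 0 :=
    (UnitaryGroup.det_isUnit ⟨_, kronecker_mem_unitary hU₁ hU₂⟩).ne_zero
  have := isStarNormal_of_mem_unitary hU₁
  have := isStarNormal_of_mem_unitary hU₂
  obtain ⟨P₁, d, rfl⟩ := H₁.exists_conj_diagonal_of_isStarNormal
  obtain ⟨P₂, e, rfl⟩ := H₂.exists_conj_diagonal_of_isStarNormal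
  rw [det_eq_prod_roots_charpoly] at hdet
  rw [roots_charpoly_kronecker_conj_diagonal] at hE h2 hdet
  obtain ⟨p₀, hp₀, hp⟩ := Finset.exists_forall_ne_mem_of_map_univ_eq_cons hE
  by_contra! hn
  have hn₁ : 2 ≤ n₁ := by have := p₀.1.pos; omega
  have hn₂ : 2 ≤ n₂ := by have := p₀.2.pos; omega
  obtain ⟨hlam_inv, hcount⟩ := lam_mul_eq_one_and_card_filter_add_two_le d e p₀ hp₀
    (fun p hp' ↦ hE' _ (hp p hp'))
    (fun p h ↦ hdet (Multiset.prod_eq_zero (h ▸ Multiset.mem_map_of_mem _ (Finset.mem_univ p))))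
    ha1 hlam.1 hlam.2 h1 (by rwa [Fintype.card_fin]) (by rwa [Fintype.card_fin])
  rcases h2 with h2 | h2
  · exact h2 (eq_one_div_of_mul_eq_one_left hlam_inv)
  rw [Multiset.count_map, ← Finset.filter_val, ← Finset.card_def] at h2
  rw [Fintype.card_fin, Fintype.card_fin] at hcount
  qify at hcount hn₁ hn₂
  nlinarith

/-- If all eigenvalues of a Kronecker product `H = H₁ ⊗ H₂` of unitary matrices, except
exactly one simple eigenvalue `λ₀`, lie in `{1, a}` with `a ≠ ±1`, and `λ₀ ≠ a²`, and
moreover `λ₀ ≠ 1/a` or the eigenvalue `1` has multiplicity `> n/2` (where `n = n₁n₂`),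
then the Kronecker product is trivial: `n₁ = 1` or `n₂ = 1`. -/
theorem stmt4 (n₁ n₂ : ℕ)
    (H₁ : Matrix (Fin n₁) (Fin n₁) ℂ) (H₂ : Matrix (Fin n₂) (Fin n₂) ℂ)
    (hU₁ : H₁ ∈ Matrix.unitaryGroup (Fin n₁) ℂ) (hU₂ : H₂ ∈ Matrix.unitaryGroup (Fin n₂) ℂ)
    (a lam₀ : ℂ) (ha1 : a ≠ 1) (ha2 : a ≠ -1)
    (E' : Multiset ℂ)
    (hE : (Matrix.kroneckerMap (· * ·) H₁ H₂).charpoly.roots = lam₀ ::ₘ E')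
    (hE' : ∀ x ∈ E', x = 1 ∨ x = a)
    (hlam : lam₀ ≠ 1 ∧ lam₀ ≠ a)
    (h1 : lam₀ ≠ a ^ 2)
    (h2 : lam₀ ≠ 1 / a ∨
      (n₁ * n₂ : ℚ) / 2 <
        (Multiset.count 1 (Matrix.kroneckerMap (· * ·) H₁ H₂).charpoly.roots : ℚ)) :
    n₁ = 1 ∨ n₂ = 1 :=
  stmt4_general n₁ n₂ H₁ H₂ hU₁ hU₂ a lam₀ ha1 E' hE hE' hlam h1 h2
end

section
/- There is no complex diagonalizable matrix A of size (n-1)×(n-1), with n ≥ 4, whose symmetric square Sym²A has eigenvalue multiset consisting of one eigenvalue equal to s with s ≠ 1, and all remaining n(n-1)/2 − 1 eigenvalues equal to 1. -/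
/-!
Conjugating `A` to `diagonal d` conjugates `Sym² A` to the diagonal matrix with entries
`dᵢ dⱼ` (`i ≤ j`), since `Sym²` is multiplicative. If all these products but one, `d_k d_l`,
equal `1`, pick an index `i ∉ {k, l}` (possible as `n - 1 ≥ 3`): then
`dᵢ² = dᵢ d_k = dᵢ d_l = 1`, so `d_k d_l = d_k d_l dᵢ² = (dᵢ d_k)(dᵢ d_l) = 1`.
-/

open Polynomial

/-- Index set for the standard basis `eᵢ ⊙ eⱼ` (`i ≤ j`) of the symmetric square. -/
def SymIdx (n : ℕ) := {p : Fin n × Fin n // p.1 ≤ p.2}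

instance (n : ℕ) : Fintype (SymIdx n) := Subtype.fintype _
instance (n : ℕ) : DecidableEq (SymIdx n) := Subtype.instDecidableEq

/-- The matrix of the induced endomorphism `Sym² A` on the symmetric square, in the basis
`eᵢ ⊙ eⱼ` (`i ≤ j`). -/
def symSq (n : ℕ) (A : Matrix (Fin n) (Fin n) ℂ) : Matrix (SymIdx n) (SymIdx n) ℂ :=
  fun r c =>
    if r.1.1 = r.1.2 then A r.1.1 c.1.1 * A r.1.1 c.1.2
    else A r.1.1 c.1.1 * A r.1.2 c.1.2 + A r.1.2 c.1.1 * A r.1.1 c.1.2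

theorem Finset.sum_sum_eq_sum_filter_le {ι β : Type*} [Fintype ι] [LinearOrder ι]
    [AddCommMonoid β] (f : ι → ι → β) :
    ∑ a, ∑ b, f a b = ∑ p ∈ univ.filter (fun p : ι × ι => p.1 ≤ p.2),
      if p.1 = p.2 then f p.1 p.1 else f p.1 p.2 + f p.2 p.1 := by
  have hswap : ∑ p ∈ univ.filter (fun p : ι × ι => ¬ p.1 ≤ p.2), f p.1 p.2
      = ∑ p ∈ univ.filter (fun p : ι × ι => p.1 < p.2), f p.2 p.1 :=
    Finset.sum_nbij' Prod.swap Prod.swap (by simp) (by simp) (by simp) (by simp) (by simp)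
  have hdiag : ∀ p : ι × ι, p.1 ≤ p.2 →
      (if p.1 = p.2 then f p.1 p.1 else f p.1 p.2 + f p.2 p.1)
        = f p.1 p.2 + if p.1 < p.2 then f p.2 p.1 else 0 := by
    intro p hp
    rcases hp.lt_or_eq with hlt | heq
    · simp [hlt, hlt.ne]
    · simp [heq]
  rw [Finset.sum_congr rfl fun p hp => hdiag p (mem_filter.1 hp).2, Finset.sum_add_distrib,
    Finset.sum_ite, Finset.sum_const_zero, add_zero, Finset.filter_filter,
    ← Finset.sum_product', Finset.univ_product_univ,
    ← Finset.sum_filter_add_sum_filter_not univ (fun p : ι × ι => p.1 ≤ p.2), hswap]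
  simp only [and_iff_right_of_imp le_of_lt]

section

variable {n : ℕ}

theorem SymIdx.sum_sum_eq_sum {β : Type*} [AddCommMonoid β] (f : Fin n → Fin n → β) :
    ∑ a, ∑ b, f a b = ∑ q : SymIdx n,
      if q.1.1 = q.1.2 then f q.1.1 q.1.1 else f q.1.1 q.1.2 + f q.1.2 q.1.1 := by
  rw [Finset.sum_sum_eq_sum_filter_le,
    Finset.sum_subtype (p := fun p : Fin n × Fin n => p.1 ≤ p.2) _ (by simp)]
  rfl

theorem symSq_mul (A B : Matrix (Fin n) (Fin n) ℂ) :
    symSq n (A * B) = symSq n A * symSq n B := by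
  ext r c
  obtain ⟨S, hSdef⟩ : ∃ S : Fin n → Fin n → ℂ, S = fun a b =>
      if r.1.1 = r.1.2 then A r.1.1 a * A r.1.1 b
      else A r.1.1 a * A r.1.2 b + A r.1.2 a * A r.1.1 b := ⟨_, rfl⟩
  have hS : ∀ a b, S a b = S b a := fun a b => by subst hSdef; dsimp only; split_ifs <;> ring
  calc symSq n (A * B) r c = ∑ a, ∑ b, S a b * (B a c.1.1 * B b c.1.2) := by
        simp only [symSq, hSdef, Matrix.mul_apply, Finset.sum_mul_sum]
        split_ifs
        · exact Finset.sum_congr rfl fun a _ => Finset.sum_congr rfl fun b _ => by ring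
        · rw [← Finset.sum_add_distrib]
          refine Finset.sum_congr rfl fun a _ => ?_
          rw [← Finset.sum_add_distrib]
          exact Finset.sum_congr rfl fun b _ => by ring
    -- regrouping ordered pairs into unordered ones is possible because `S` is symmetric
    _ = ∑ q : SymIdx n, S q.1.1 q.1.2 * symSq n B q c := by
        rw [SymIdx.sum_sum_eq_sum]
        refine Finset.sum_congr rfl fun q _ => ?_
        simp only [symSq]
        split_ifs with hq
        · rw [hq]
        · rw [hS q.1.2 q.1.1, mul_add]
    _ = (symSq n A * symSq n B) r c := by rw [hSdef]; rfl

theorem symSq_diagonal (d : Fin n → ℂ) :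
    symSq n (Matrix.diagonal d) = Matrix.diagonal fun q : SymIdx n => d q.1.1 * d q.1.2 := by
  ext r c
  by_cases hrc : r = c
  · subst hrc
    simp only [symSq, Matrix.diagonal_apply_eq]
    split_ifs with h
    · rw [h, Matrix.diagonal_apply_eq]
    · rw [Matrix.diagonal_apply_ne _ (Ne.symm h), zero_mul, add_zero]
  · rw [Matrix.diagonal_apply_ne _ hrc]
    obtain ⟨⟨r₁, r₂⟩, hr⟩ := r
    obtain ⟨⟨c₁, c₂⟩, hc⟩ := c
    have h₁ : ¬(r₁ = c₁ ∧ r₂ = c₂) := by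
      rintro ⟨rfl, rfl⟩
      exact hrc rfl
    have h₂ : ¬(r₂ = c₁ ∧ r₁ = c₂) := by
      rintro ⟨rfl, rfl⟩
      obtain rfl : r₁ = r₂ := le_antisymm hr hc
      exact hrc rfl
    simp only [symSq, Matrix.diagonal_apply]
    split_ifs <;> simp_all

theorem symSq_one : symSq n 1 = 1 := by
  simpa using symSq_diagonal (n := n) 1

theorem roots_charpoly_diagonal {ι R : Type*} [Fintype ι] [DecidableEq ι] [CommRing R]
    [IsDomain R] (d : ι → R) : (Matrix.diagonal d).charpoly.roots = Finset.univ.val.map d := by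
  rw [Matrix.charpoly_diagonal, ← Polynomial.roots_multiset_prod_X_sub_C (Finset.univ.val.map d),
    Multiset.map_map]
  rfl

theorem roots_charpoly_symSq_of_conj_eq_diagonal {A : Matrix (Fin n) (Fin n) ℂ}
    {P : (Matrix (Fin n) (Fin n) ℂ)ˣ} {d : Fin n → ℂ}
    (hd : (↑P⁻¹ : Matrix (Fin n) (Fin n) ℂ) * A * (↑P : Matrix (Fin n) (Fin n) ℂ)
      = Matrix.diagonal d) :
    (symSq n A).charpoly.roots = Finset.univ.val.map fun q : SymIdx n => d q.1.1 * d q.1.2 := by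
  rw [← roots_charpoly_diagonal, ← symSq_diagonal, ← hd, symSq_mul, symSq_mul,
    Matrix.charpoly_mul_comm, ← mul_assoc, ← symSq_mul, P.mul_inv, symSq_one, one_mul]

theorem Multiset.exists_forall_ne_eq_of_map_univ_eq_cons_replicate {ι α : Type*} [Fintype ι]
    {F : ι → α} {s a : α} {m : ℕ} (hs : s ≠ a)
    (h : Finset.univ.val.map F = s ::ₘ Multiset.replicate m a) :
    ∃ r, F r = s ∧ ∀ q, q ≠ r → F q = a := by
  classical
  have hfilter : (Finset.univ.filter (F · ≠ a)).val.map F = {s} := by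
    rw [Finset.filter_val]
    refine (Multiset.filter_map (· ≠ a) F _).symm.trans ?_
    rw [h, Multiset.filter_cons_of_pos (p := (· ≠ a)) _ hs,
      Multiset.filter_eq_nil.2 fun x hx => by simp [Multiset.eq_of_mem_replicate hx]]
    rfl
  have hcard := congrArg Multiset.card hfilter
  rw [Multiset.card_map, Multiset.card_singleton] at hcard
  obtain ⟨r, hr⟩ := Finset.card_eq_one.1 hcard
  rw [hr] at hfilter
  refine ⟨r, by simpa using hfilter, fun q hq => ?_⟩
  by_contra hqa
  exact hq (Finset.mem_singleton.1 (hr ▸ Finset.mem_filter.2 ⟨Finset.mem_univ q, hqa⟩))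

theorem SymIdx.mul_eq_one_of_forall_ne {M : Type*} [CommMonoid M] (hn : 3 ≤ n) (d : Fin n → M)
    (r : SymIdx n) (h : ∀ q : SymIdx n, q ≠ r → d q.1.1 * d q.1.2 = 1) :
    d r.1.1 * d r.1.2 = 1 := by
  obtain ⟨i, -, hi⟩ := Finset.exists_mem_notMem_of_card_lt_card
    (s := {r.1.1, r.1.2}) (t := Finset.univ)
    (by simpa using (Finset.card_le_two (a := r.1.1) (b := r.1.2)).trans_lt (by omega))
  simp only [Finset.mem_insert, Finset.mem_singleton, not_or] at hi
  have hdi : ∀ b, d i * d b = 1 := fun b => by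
    rcases le_total i b with hib | hbi
    · exact h ⟨(i, b), hib⟩ fun hq => hi.1 (congrArg (·.1.1) hq)
    · rw [mul_comm]
      exact h ⟨(b, i), hbi⟩ fun hq => hi.2 (congrArg (·.1.2) hq)
  calc d r.1.1 * d r.1.2 = d r.1.1 * d r.1.2 * (d i * d i) := by rw [hdi, mul_one]
    _ = d i * d r.1.1 * (d i * d r.1.2) := by ac_rfl
    _ = 1 := by rw [hdi, hdi, one_mul]

end

/-- For `n ≥ 4`, no diagonalizable `(n-1) × (n-1)` complex matrix `A` has a symmetric
square whose eigenvalue multiset consists of one eigenvalue `s ≠ 1` and all remaining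
`n(n-1)/2 - 1` eigenvalues equal to `1`. -/
theorem stmt5 (n : ℕ) (hn : 4 ≤ n) (A : Matrix (Fin (n - 1)) (Fin (n - 1)) ℂ)
    (hdiag : ∃ P : (Matrix (Fin (n - 1)) (Fin (n - 1)) ℂ)ˣ, ∃ d : Fin (n - 1) → ℂ,
      (↑P⁻¹ : Matrix (Fin (n - 1)) (Fin (n - 1)) ℂ) * A * (↑P : Matrix (Fin (n - 1)) (Fin (n - 1)) ℂ)
        = Matrix.diagonal d)
    (s : ℂ) (hs : s ≠ 1) :
    ¬ (symSq (n - 1) A).charpoly.roots = s ::ₘ Multiset.replicate (n * (n - 1) / 2 - 1) 1 := by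
  intro hroots
  obtain ⟨P, d, hd⟩ := hdiag
  rw [roots_charpoly_symSq_of_conj_eq_diagonal hd] at hroots
  obtain ⟨r, hr, hothers⟩ :=
    Multiset.exists_forall_ne_eq_of_map_univ_eq_cons_replicate hs hroots
  exact hs (hr ▸ SymIdx.mul_eq_one_of_forall_ne (by omega) d r hothers)
end

section
/- Let A be a diagonalizable matrix such that no quotient of two distinct eigenvalues of A is a root of unity, and let m ≠ 0 be an integer. Then A and A^m have exactly the same invariant subspaces. -/
/-!
The map `x ↦ x ^ m` is injective on the eigenvalues of `A`: two distinct eigenvalues with equal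
`m`-th powers would have a root of unity as quotient. Diagonalizing `A = P D P⁻¹`, Lagrange
interpolation on the diagonal therefore gives polynomials `p`, `q` with `A = p(Aᵐ)` and
`Aᵐ = q(A)`, and a subspace invariant under a matrix is invariant under every polynomial in it.
-/

open Matrix Polynomial

theorem div_pow_natAbs_eq_one_of_zpow_eq_zpow {G₀ : Type*} [CommGroupWithZero G₀] {x y : G₀}
    {m : ℤ} (hm : m ≠ 0) (hxy : x ≠ y) (h : x ^ m = y ^ m) : (x / y) ^ m.natAbs = 1 := by
  have hy : y ≠ 0 := by
    rintro rfl
    exact hxy ((zpow_eq_zero_iff hm).mp (h.trans (zero_zpow m hm)))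
  have hm_root : (x / y) ^ m = 1 := by rw [div_zpow, h, div_self (zpow_ne_zero m hy)]
  rw [← zpow_natCast]
  rcases Int.natAbs_eq m with hm_abs | hm_abs
  · rwa [← hm_abs]
  · rw [show (m.natAbs : ℤ) = -m by omega, _root_.zpow_neg, hm_root, inv_one]

theorem Polynomial.aeval_units_conj {R A : Type*} [CommSemiring R] [Ring A] [Algebra R A]
    (u : Aˣ) (x : A) (p : R[X]) : aeval (↑u * x * ↑u⁻¹ : A) p = ↑u * aeval x p * ↑u⁻¹ :=
  aeval_algHom_apply (MulSemiringAction.toAlgEquiv R A (ConjAct.toConjAct u)) x p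

namespace Matrix

variable {n R K : Type*} [Fintype n] [DecidableEq n]

theorem aeval_diagonal [CommSemiring R] (d : n → R) (p : R[X]) :
    aeval (diagonal d) p = diagonal fun i => p.eval (d i) := by
  rw [← diagonalAlgHom_apply (R := R), aeval_algHom_apply, aeval_pi_apply]
  simp [coe_aeval_eq_eval]

theorem exists_aeval_units_conj_diagonal_eq [Field K] (P : (Matrix n n K)ˣ) {x y : n → K}
    (h : ∀ i j, x i = x j → y i = y j) :
    ∃ p : K[X], aeval ((↑P : Matrix n n K) * diagonal x * (↑P⁻¹ : Matrix n n K)) p =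
      (↑P : Matrix n n K) * diagonal y * (↑P⁻¹ : Matrix n n K) := by
  obtain ⟨p, hp⟩ := (exists_eval_eq_iff x y).mpr h
  exact ⟨p, by simp only [aeval_units_conj, aeval_diagonal, hp]⟩

theorem mulVecLin_aeval [CommSemiring R] (M : Matrix n n R) (p : R[X]) :
    (aeval M p).mulVecLin = aeval M.mulVecLin p :=
  (aeval_algHom_apply (toLinAlgEquiv' : Matrix n n R ≃ₐ[R] _) M p).symm

theorem mulVecLin_aeval_mem [CommSemiring R] {M : Matrix n n R} {W : Submodule R (n → R)}
    (hW : ∀ v ∈ W, M.mulVecLin v ∈ W) (p : R[X]) : ∀ v ∈ W, (aeval M p).mulVecLin v ∈ W := by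
  intro v hv
  rw [mulVecLin_aeval]
  exact aeval_apply_smul_mem_of_le_comap hv p _ hW

theorem val_zpow_of_val_eq_diagonal [Field K] {D : (Matrix n n K)ˣ} {d : n → K}
    (hD : ↑D = diagonal d) (m : ℤ) : ↑(D ^ m) = diagonal fun i => d i ^ m := by
  have hd : ∀ i, d i ≠ 0 := by
    have := isUnit_diagonal.mp (hD ▸ D.isUnit)
    exact fun i => (Pi.isUnit_iff.mp this i).ne_zero
  have hinv : ↑D⁻¹ = diagonal d⁻¹ := by
    refine Units.inv_eq_of_mul_eq_one_right ?_
    rw [hD, diagonal_mul_diagonal, ← diagonal_one]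
    exact congrArg diagonal (funext fun i => mul_inv_cancel₀ (hd i))
  cases m with
  | ofNat k => simp [hD, diagonal_pow]
  | negSucc k =>
    rw [zpow_negSucc, ← inv_pow, Units.val_pow_eq_pow_val, hinv, diagonal_pow]
    simp [zpow_negSucc]

theorem hasEigenvalue_mulVecLin_of_conj_eq_diagonal [Field K] {A : Matrix n n K}
    {P : (Matrix n n K)ˣ} {d : n → K}
    (h : (↑P⁻¹ : Matrix n n K) * A * (↑P : Matrix n n K) = diagonal d) (i : n) :
    Module.End.HasEigenvalue A.mulVecLin (d i) := by
  rw [Module.End.hasEigenvalue_iff_mem_spectrum, ← toLin'_apply', spectrum_toLin',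
    ← spectrum.units_conjugate' (u := P), h, spectrum_diagonal]
  exact ⟨i, rfl⟩

end Matrix

/-- If `A` is a diagonalizable invertible complex matrix such that no quotient of two
distinct eigenvalues of `A` is a root of unity, then for every integer `m ≠ 0`, the
matrices `A` and `Aᵐ` have exactly the same invariant subspaces. -/
theorem stmt11 (n : ℕ) (A : (Matrix (Fin n) (Fin n) ℂ)ˣ)
    (hdiag : ∃ P : (Matrix (Fin n) (Fin n) ℂ)ˣ, ∃ d : Fin n → ℂ,
      (↑P⁻¹ : Matrix (Fin n) (Fin n) ℂ) * (↑A : Matrix (Fin n) (Fin n) ℂ) *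
        (↑P : Matrix (Fin n) (Fin n) ℂ) = Matrix.diagonal d)
    (heig : ∀ lam mu : ℂ,
      Module.End.HasEigenvalue (↑A : Matrix (Fin n) (Fin n) ℂ).mulVecLin lam →
      Module.End.HasEigenvalue (↑A : Matrix (Fin n) (Fin n) ℂ).mulVecLin mu →
      lam ≠ mu → ∀ r : ℕ, 0 < r → (lam / mu) ^ r ≠ 1)
    (m : ℤ) (hm : m ≠ 0) :
    ∀ W : Submodule ℂ (Fin n → ℂ),
      (∀ v ∈ W, (↑A : Matrix (Fin n) (Fin n) ℂ).mulVecLin v ∈ W) ↔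
      (∀ v ∈ W, (↑(A ^ m) : Matrix (Fin n) (Fin n) ℂ).mulVecLin v ∈ W) := by
  obtain ⟨P, d, hPD⟩ := hdiag
  obtain ⟨D, hD, hA⟩ : ∃ D : (Matrix (Fin n) (Fin n) ℂ)ˣ,
      (↑D : Matrix (Fin n) (Fin n) ℂ) = diagonal d ∧ A = P * D * P⁻¹ :=
    ⟨P⁻¹ * A * P, by simpa using hPD, by simp [mul_assoc]⟩
  have hAm : (↑(A ^ m) : Matrix (Fin n) (Fin n) ℂ) =
      (↑P : Matrix (Fin n) (Fin n) ℂ) * diagonal (fun i => d i ^ m) *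
        (↑P⁻¹ : Matrix (Fin n) (Fin n) ℂ) := by
    rw [hA, conj_zpow, Units.val_mul, Units.val_mul, val_zpow_of_val_eq_diagonal hD]
  have hA' : (↑A : Matrix (Fin n) (Fin n) ℂ) =
      (↑P : Matrix (Fin n) (Fin n) ℂ) * diagonal d * (↑P⁻¹ : Matrix (Fin n) (Fin n) ℂ) := by
    rw [← hD, ← Units.val_mul, ← Units.val_mul, ← hA]
  have hpow_inj : ∀ i j, d i ^ m = d j ^ m → d i = d j := fun i j h => by
    by_contra hne
    exact heig _ _ (hasEigenvalue_mulVecLin_of_conj_eq_diagonal hPD i)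
      (hasEigenvalue_mulVecLin_of_conj_eq_diagonal hPD j) hne _ (Int.natAbs_pos.mpr hm)
      (div_pow_natAbs_eq_one_of_zpow_eq_zpow hm hne h)
  obtain ⟨p, hp⟩ := exists_aeval_units_conj_diagonal_eq P hpow_inj
  obtain ⟨q, hq⟩ := exists_aeval_units_conj_diagonal_eq P (x := d) (y := fun i => d i ^ m)
    fun i j h => by rw [h]
  rw [← hAm, ← hA'] at hp hq
  exact fun W => ⟨fun h => hq ▸ mulVecLin_aeval_mem h q, fun h => hp ▸ mulVecLin_aeval_mem h p⟩
end

section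
/- For the Lawrence–Krammer representation ρ_n of the braid group B_n on ℂ^{n(n−1)/2}, the determinant of ρ_n(σ_i) equals −t·(−q)^n for every generator σ_i. -/
/-!
Let `s` be the transposition `(i i+1)` acting on the pairs `j < k`, with `(i, i+1)` fixed.
Permuting the columns of `ρ_n(σᵢ)` by `s` makes it triangular: its off-diagonal entries all lie
in the `n - 2` columns indexed by the pairs `(j, i)`, `(i, k)` through `i`, and in rows outside
them (the partner pair and `(i, i+1)`). The diagonal is `-t q²` at `(i, i+1)`, `q` at the pairs
through `i` and `1` elsewhere, while `s` is a product of `n - 2` disjoint transpositions, so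
`det ρ_n(σᵢ) = (-1)^(n-2) · (-t q²) · q^(n-2) = -t (-q)^n`.
-/

/-- Index set `{(j,k) : 1 ≤ j < k ≤ n}` for the basis `v_{j,k}` of the Lawrence–Krammer
representation space `ℂ^{n(n-1)/2}`. -/
def LKIdx (n : ℕ) := {p : Fin (n + 1) × Fin (n + 1) // 1 ≤ (p.1 : ℕ) ∧ (p.1 : ℕ) < (p.2 : ℕ)}

instance (n : ℕ) : Fintype (LKIdx n) := Subtype.fintype _
instance (n : ℕ) : DecidableEq (LKIdx n) := Subtype.instDecidableEq

/-- The matrix of `ρ_n(σᵢ)` for the Lawrence–Krammer representation, in the basis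
`{v_{j,k} : 1 ≤ j < k ≤ n}`: the entry at row `(a,b)`, column `(j,k)` is the coefficient
of `v_{a,b}` in `ρ_n(σᵢ) v_{j,k}`, following the standard formulas:
`ρ_n(σᵢ) v_{j,k} = v_{j,k}` if `i ∉ {j-1, j, k-1, k}`;
`= q v_{i,k} + (q²-q) v_{i,j} + (1-q) v_{j,k}` if `i = j-1`;
`= v_{j+1,k}` if `i = j ≠ k-1`;
`= q v_{j,i} + (1-q) v_{j,k} - (q²-q) t v_{i,k}` if `i = k-1 ≠ j`;
`= v_{j,k+1}` if `i = k`; and `= -t q² v_{j,k}` if `i = j = k-1`. -/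
def LK (n : ℕ) (q t : ℂ) (i : ℕ) : Matrix (LKIdx n) (LKIdx n) ℂ := fun r c =>
  let j : ℕ := (c.1.1 : ℕ); let k : ℕ := (c.1.2 : ℕ)
  let a : ℕ := (r.1.1 : ℕ); let b : ℕ := (r.1.2 : ℕ)
  if i = j - 1 then
    (if (a, b) = (i, k) then q else 0) + (if (a, b) = (i, j) then q ^ 2 - q else 0) +
      (if (a, b) = (j, k) then 1 - q else 0)
  else if i = j ∧ i = k - 1 then (if (a, b) = (j, k) then -t * q ^ 2 else 0)
  else if i = j then (if (a, b) = (j + 1, k) then 1 else 0)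
  else if i = k - 1 then
    (if (a, b) = (j, i) then q else 0) + (if (a, b) = (j, k) then 1 - q else 0) +
      (if (a, b) = (i, k) then -(q ^ 2 - q) * t else 0)
  else if i = k then (if (a, b) = (j, k + 1) then 1 else 0)
  else (if (a, b) = (j, k) then 1 else 0)

open Finset Equiv

theorem Matrix.det_eq_prod_diag_of_offDiag_ne_zero {ι R : Type*} [Fintype ι] [DecidableEq ι]
    [CommRing R] (M : Matrix ι ι R) (p : ι → Prop) [DecidablePred p]
    (h : ∀ i j, i ≠ j → M i j ≠ 0 → ¬p i ∧ p j) :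
    M.det = ∏ i, M i i := by
  have hzero : ∀ i j, i ≠ j → p i ∨ ¬p j → M i j = 0 := fun i j hij hij' =>
    not_not.mp fun hM => by have := h i j hij hM; tauto
  have hdiag (r : ι → Prop) [DecidablePred r] (hr : ∀ i j, r i → r j → i ≠ j → M i j = 0) :
      (M.toSquareBlockProp r).det = ∏ i : {i // r i}, M i i := by
    rw [← Matrix.det_diagonal]
    congr 1
    ext i j
    by_cases hij : i = j
    · simp [hij, Matrix.toSquareBlockProp_def]
    · simp [Matrix.diagonal_apply_ne _ hij, Matrix.toSquareBlockProp_def,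
        hr i j i.2 j.2 (Subtype.coe_injective.ne hij)]
  rw [Matrix.twoBlockTriangular_det' M p
      fun i hi j hj => hzero i j (fun e => hj (e ▸ hi)) (.inl hi),
    hdiag p fun i j hi _ hij => hzero i j hij (.inl hi),
    hdiag (¬p ·) fun i j _ hj hij => hzero i j hij (.inr hj),
    Fintype.prod_subtype_mul_prod_subtype p (fun i => M i i)]

theorem Equiv.Perm.sign_eq_neg_one_pow_card_of_involutive {α : Type*} [Fintype α] [DecidableEq α]
    {σ : Perm α} (hσ : Function.Involutive σ) (S : Finset α)
    (hS : ∀ x ∈ S, σ x ∉ S) (hfix : ∀ x, x ∉ S → σ x ∉ S → σ x = x) :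
    Perm.sign σ = (-1) ^ #S := by
  have hsupp : σ.support = S.disjUnion (S.map σ.toEmbedding) (by
      rw [disjoint_left]
      intro x hx hx'
      obtain ⟨y, hy, rfl⟩ := mem_map.mp hx'
      exact hS y hy hx) := by
    ext x
    have hsymm : σ.symm x = σ x := σ.symm_apply_eq.mpr (hσ x).symm
    simp only [Perm.mem_support, mem_disjUnion, mem_map_equiv, hsymm]
    refine ⟨fun hx => by by_contra! h; exact hx (hfix x h.1 h.2), ?_⟩
    rintro (hx | hx) hx'
    · exact hS x hx (hx'.symm ▸ hx)
    · exact hS _ hx (by rwa [hσ x, ← hx'])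
  have hsq : σ ^ 2 = 1 := by ext x; simp [sq, hσ x]
  rw [Perm.sign_of_pow_two_eq_one hsq, Perm.card_fixedPoints, Perm.sum_cycleType,
    Nat.sub_sub_self (card_le_univ _), hsupp, card_disjUnion, card_map, ← two_mul,
    Nat.mul_div_cancel_left _ two_pos]

namespace LKIdx

variable {n i : ℕ}

def of (a b : ℕ) (h : 1 ≤ a ∧ a < b ∧ b ≤ n) : LKIdx n :=
  ⟨(⟨a, by omega⟩, ⟨b, by omega⟩), h.1, h.2.1⟩

@[simp] lemma of_fst (a b : ℕ) (h) : ((of (n := n) a b h).1.1 : ℕ) = a := rfl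

@[simp] lemma of_snd (a b : ℕ) (h) : ((of (n := n) a b h).1.2 : ℕ) = b := rfl

lemma ext_iff {x y : LKIdx n} : x = y ↔ (x.1.1 : ℕ) = y.1.1 ∧ (x.1.2 : ℕ) = y.1.2 :=
  ⟨fun h => h ▸ ⟨rfl, rfl⟩, fun ⟨h1, h2⟩ => Subtype.ext (Prod.ext (Fin.ext h1) (Fin.ext h2))⟩

lemma bounds (x : LKIdx n) : 1 ≤ (x.1.1 : ℕ) ∧ (x.1.1 : ℕ) < x.1.2 ∧ (x.1.2 : ℕ) ≤ n :=
  ⟨x.2.1, x.2.2, Nat.lt_succ_iff.mp x.1.2.isLt⟩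

def pairsAt (n i : ℕ) : Finset (LKIdx n) :=
  univ.filter fun x => ((x.1.1 : ℕ) = i ∨ (x.1.2 : ℕ) = i) ∧ (x.1.2 : ℕ) ≠ i + 1

lemma mem_pairsAt {x : LKIdx n} :
    x ∈ pairsAt n i ↔ ((x.1.1 : ℕ) = i ∨ (x.1.2 : ℕ) = i) ∧ (x.1.2 : ℕ) ≠ i + 1 := by
  simp [pairsAt]

lemma card_pairsAt (hi : 1 ≤ i) (hin : i < n) : #(pairsAt n i) = n - 2 := by
  rw [show n - 2 = #(((Icc 1 n).erase i).erase (i + 1)) by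
    rw [card_erase_of_mem (by simp; omega), card_erase_of_mem (by simp; omega), Nat.card_Icc]
    omega]
  -- a pair through `i` is determined by its other endpoint
  refine card_bij' (fun x _ => (x.1.1 : ℕ) + x.1.2 - i)
    (fun m hm => if h : m < i then of m i (by simp at hm; omega) else of i m (by simp at hm; omega))
    ?_ ?_ ?_ ?_
  · intro x hx
    have := x.bounds
    simp only [mem_pairsAt] at hx
    simp only [mem_erase, mem_Icc]
    omega
  · intro m hm
    simp only [mem_erase, mem_Icc] at hm
    split_ifs <;> simp only [mem_pairsAt, of_fst, of_snd, or_true, true_or, true_and] <;> omega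
  · intro x hx
    have := x.bounds
    simp only [mem_pairsAt] at hx
    split_ifs <;> simp only [ext_iff, of_fst, of_snd] <;> omega
  · intro m hm
    split_ifs <;> simp only [of_fst, of_snd] <;> omega

/-- The transposition `(i i+1)` acting on pairs; it fixes `(i, i+1)`, whose image would not be
a pair `j < k`. -/
def adjSwap (hi : 1 ≤ i) (hin : i < n) (x : LKIdx n) : LKIdx n :=
  if h : (x.1.1 : ℕ) = i ∧ (x.1.2 : ℕ) = i + 1 then x
  else of (swap i (i + 1) x.1.1) (swap i (i + 1) x.1.2) (by
    have := x.bounds; simp only [swap_apply_def]; split_ifs <;> omega)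

variable (hi : 1 ≤ i) (hin : i < n)

lemma adjSwap_fst (x : LKIdx n) : ((adjSwap hi hin x).1.1 : ℕ) =
    if (x.1.1 : ℕ) = i ∧ (x.1.2 : ℕ) = i + 1 then (x.1.1 : ℕ) else swap i (i + 1) x.1.1 := by
  unfold adjSwap; split_ifs <;> rfl

lemma adjSwap_snd (x : LKIdx n) : ((adjSwap hi hin x).1.2 : ℕ) =
    if (x.1.1 : ℕ) = i ∧ (x.1.2 : ℕ) = i + 1 then (x.1.2 : ℕ) else swap i (i + 1) x.1.2 := by
  unfold adjSwap; split_ifs <;> rfl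

lemma adjSwap_involutive : Function.Involutive (adjSwap hi hin) := by
  intro x
  have := x.bounds
  simp only [ext_iff, adjSwap_fst, adjSwap_snd, swap_apply_def]
  split_ifs <;> omega

def adjSwapPerm : Perm (LKIdx n) := (adjSwap_involutive hi hin).toPerm

lemma sign_adjSwapPerm : Perm.sign (adjSwapPerm hi hin) = (-1) ^ (n - 2) := by
  rw [Perm.sign_eq_neg_one_pow_card_of_involutive (adjSwap_involutive hi hin) (pairsAt n i),
    card_pairsAt hi hin]
  · intro x hx
    have := x.bounds
    simp only [adjSwapPerm, Function.Involutive.coe_toPerm, mem_pairsAt, adjSwap_fst, adjSwap_snd,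
      swap_apply_def] at hx ⊢
    split_ifs <;> omega
  · intro x hx hσx
    have := x.bounds
    simp only [adjSwapPerm, Function.Involutive.coe_toPerm, mem_pairsAt, ext_iff, adjSwap_fst,
      adjSwap_snd, swap_apply_def] at hx hσx ⊢
    split_ifs at hσx ⊢ <;> omega

end LKIdx

open LKIdx

section

variable (q t : ℂ) {n i : ℕ} (hi : 1 ≤ i) (hin : i < n)

lemma LK_apply_adjSwap_self (x : LKIdx n) :
    LK n q t i x (adjSwap hi hin x) =
      (if x = of i (i + 1) ⟨hi, i.lt_succ_self, hin⟩ then -t * q ^ 2 else 1) *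
        if x ∈ pairsAt n i then q else 1 := by
  have := x.bounds
  simp only [LK, mem_pairsAt, ext_iff, of_fst, of_snd, adjSwap_fst, adjSwap_snd, swap_apply_def,
    Prod.mk.injEq]
  generalize (x.1.1 : ℕ) = a at *
  generalize (x.1.2 : ℕ) = b at *
  -- in each case every condition in `LK` and `adjSwap` is decided by `omega`
  rcases (by omega : (a = i ∧ b = i + 1) ∨ (a = i ∧ i + 1 < b) ∨ a = i + 1 ∨ b = i ∨
      (b = i + 1 ∧ a < i) ∨ (a ≠ i ∧ a ≠ i + 1 ∧ b ≠ i ∧ b ≠ i + 1)) with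
    h | h | h | h | h | h <;>
  simp (disch := omega) only [and_true, true_and, if_true, if_pos, if_neg, add_zero, mul_one,
    one_mul]

lemma LK_apply_adjSwap_of_ne {r c : LKIdx n} (hrc : r ≠ c)
    (hLK : LK n q t i r (adjSwap hi hin c) ≠ 0) : r ∉ pairsAt n i ∧ c ∈ pairsAt n i := by
  have := r.bounds
  have := c.bounds
  rw [Ne, ext_iff] at hrc
  simp only [LK, mem_pairsAt, adjSwap_fst, adjSwap_snd, swap_apply_def, Prod.mk.injEq] at hLK ⊢
  generalize (r.1.1 : ℕ) = a at *
  generalize (r.1.2 : ℕ) = b at *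
  generalize (c.1.1 : ℕ) = j at *
  generalize (c.1.2 : ℕ) = k at *
  rcases (by omega : (j = i ∧ k = i + 1) ∨ (j = i ∧ i + 1 < k) ∨ j = i + 1 ∨ k = i ∨
      (k = i + 1 ∧ j < i) ∨ (j ≠ i ∧ j ≠ i + 1 ∧ k ≠ i ∧ k ≠ i + 1)) with
    h | h | h | h | h | h <;>
  simp (disch := omega) only [true_and, if_pos, if_neg] at hLK <;>
  (try split_ifs at hLK) <;> first | omega | simp at hLK

lemma det_LK_submatrix_adjSwapPerm :
    ((LK n q t i).submatrix id (adjSwapPerm hi hin)).det =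
      -t * q ^ 2 * q ^ (n - 2) := by
  have hoff (r c : LKIdx n) (hrc : r ≠ c)
      (hM : (LK n q t i).submatrix id (adjSwapPerm hi hin) r c ≠ 0) :
      r ∉ pairsAt n i ∧ c ∈ pairsAt n i :=
    LK_apply_adjSwap_of_ne q t hi hin hrc hM
  rw [Matrix.det_eq_prod_diag_of_offDiag_ne_zero _ _ hoff]
  simp only [Matrix.submatrix_apply, id, adjSwapPerm, Function.Involutive.coe_toPerm,
    LK_apply_adjSwap_self,
    prod_mul_distrib, prod_ite_eq', if_pos (mem_univ _), prod_ite_mem, univ_inter, prod_const,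
    card_pairsAt hi hin]

end

theorem stmt15_general (n : ℕ) (q t : ℂ) (i : ℕ) (hi1 : 1 ≤ i) (hi2 : i ≤ n - 1) :
    (LK n q t i).det = -t * (-q) ^ n := by
  have hin : i < n := by omega
  have hperm := Matrix.det_permute' (adjSwapPerm hi1 hin) (LK n q t i)
  rw [det_LK_submatrix_adjSwapPerm, sign_adjSwapPerm] at hperm
  obtain ⟨m, rfl⟩ : ∃ m, n = m + 2 := ⟨n - 2, by omega⟩
  rw [Nat.add_sub_cancel] at hperm
  push_cast at hperm
  have hsq : ((-1 : ℂ) ^ m) ^ 2 = 1 := by rw [← pow_mul, mul_comm, pow_mul, neg_one_sq, one_pow]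
  rw [neg_pow q]
  linear_combination -(-1 : ℂ) ^ m * hperm - (LK (m + 2) q t i).det * hsq

/-- The determinant of the Lawrence–Krammer matrix `ρ_n(σᵢ)` equals `-t·(-q)ⁿ` for every
generator `σᵢ`, `1 ≤ i ≤ n-1`. -/
theorem stmt15 (n : ℕ) (hn : 2 ≤ n) (q t : ℂ) (i : ℕ) (hi1 : 1 ≤ i) (hi2 : i ≤ n - 1) :
    (LK n q t i).det = -t * (-q) ^ n :=
  stmt15_general n q t i hi1 hi2
end
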